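/- Let n ≥ 1 and for each j ∈ {1,…,n} let ξ₁^j, ξ₂^j ∈ ℝ^5 be a pair of linearly independent vectors. Then there exist points x₁, …, x_n ∈ ℝ^5 such that for all i ≠ j the sets (ℝξ₁^i + ℝξ₂^i + x_i + (2πℤ)^5) and (ℝξ₁^j + ℝξ₂^j + x_j + (2πℤ)^5) are disjoint subsets of ℝ^5; equivalently, the images in the torus ℝ^5/(2πℤ)^5 of the translated planes spanned by (ξ₁^j, ξ₂^j) are pairwise disjoint. -/
import Mathlib


open Real Set

/-- The translated plane spanned by `u` and `w`, based at `x`, modulo the lattice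
`(2πℤ)^5`, viewed as a subset of `ℝ^5`:
`{s u + t w + x + 2πk : s, t ∈ ℝ, k ∈ ℤ^5}`. -/
def translatedPlane (u w x : Fin 5 → ℝ) : Set (Fin 5 → ℝ) :=
  {y | ∃ (s t : ℝ) (k : Fin 5 → ℤ), y = s • u + t • w + x + fun m => 2 * Real.pi * (k m : ℝ)}

open MeasureTheory in
/-- **Choice of base points for the Mikado flows (Section 2.1).**
Given finitely many pairs `(ξ₁^j, ξ₂^j)` of linearly independent vectors in `ℝ^5`, there
exist base points `x_1, …, x_n` such that the translated planes
`ℝξ₁^j + ℝξ₂^j + x_j + (2πℤ)^5` are pairwise disjoint subsets of `ℝ^5`; equivalently,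
their images in the torus `ℝ^5/(2πℤ)^5` are pairwise disjoint. -/
theorem mikado_base_points (n : ℕ) (hn : 1 ≤ n)
    (ξ₁ ξ₂ : Fin n → (Fin 5 → ℝ))
    (hind : ∀ j, LinearIndependent ℝ ![ξ₁ j, ξ₂ j]) :
    ∃ x : Fin n → (Fin 5 → ℝ), ∀ i j, i ≠ j →
      Disjoint (translatedPlane (ξ₁ i) (ξ₂ i) (x i))
        (translatedPlane (ξ₁ j) (ξ₂ j) (x j)) := by
  classical
  -- the span of the four direction vectors
  let W : Fin n → Fin n → Submodule ℝ (Fin 5 → ℝ) := fun i j =>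
    Submodule.span ℝ {ξ₁ i, ξ₂ i, ξ₁ j, ξ₂ j}
  have hW : ∀ i j, W i j ≠ ⊤ := by
    intro i j
    refine ne_of_lt (span_lt_top_of_card_lt_finrank ?_)
    have h1 : ({ξ₁ i, ξ₂ i, ξ₁ j, ξ₂ j} : Set (Fin 5 → ℝ)).toFinset.card ≤ 4 := by
      simp only [Set.toFinset_insert, Set.toFinset_singleton]
      refine (Finset.card_insert_le _ _).trans (Nat.succ_le_succ ?_)
      refine (Finset.card_insert_le _ _).trans (Nat.succ_le_succ ?_)
      refine (Finset.card_insert_le _ _).trans (Nat.succ_le_succ ?_)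
      simp
    have h2 : Module.finrank ℝ (Fin 5 → ℝ) = 5 := by simp
    omega
  -- the lattice vectors
  let c : (Fin 5 → ℤ) → (Fin 5 → ℝ) := fun k m => 2 * Real.pi * (k m : ℝ)
  -- the bad sets
  let S : Fin n → Fin n → (Fin 5 → ℤ) → Set (Fin n → (Fin 5 → ℝ)) := fun i j k =>
    {x | x i - x j - c k ∈ W i j}
  have hS : ∀ i j (k : Fin 5 → ℤ), i ≠ j → volume (S i j k) = 0 := by
    intro i j k hij
    let g : (Fin n → (Fin 5 → ℝ)) →ₗ[ℝ] (Fin 5 → ℝ) := (LinearMap.proj (R := ℝ) (φ := fun _ : Fin n => (Fin 5 → ℝ)) i) - (LinearMap.proj (R := ℝ) (φ := fun _ : Fin n => (Fin 5 → ℝ)) j)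
    have hg : ∀ (x : (Fin n → (Fin 5 → ℝ))), g x = x i - x j := fun x => rfl
    have hsurj : Function.Surjective g := by
      intro v
      refine ⟨Pi.single i v, ?_⟩
      rw [hg]
      simp [Pi.single_eq_same, Pi.single_eq_of_ne (Ne.symm hij)]
    let W' : Submodule ℝ (Fin n → (Fin 5 → ℝ)) := (W i j).comap g
    have hW' : W' ≠ ⊤ := by
      intro h
      apply hW i j
      rw [eq_top_iff]
      intro v _
      obtain ⟨x, hx⟩ := hsurj v
      have hmem : x ∈ W' := h ▸ Submodule.mem_top
      rw [Submodule.mem_comap, hx] at hmem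
      exact hmem
    have hset : S i j k = (fun x : (Fin n → (Fin 5 → ℝ)) => -Pi.single i (c k) + x) ⁻¹' (W' : Set (Fin n → (Fin 5 → ℝ))) := by
      ext x
      have key : g (-Pi.single i (c k) + x) = x i - x j - c k := by
        rw [hg]
        simp only [Pi.add_apply, Pi.neg_apply, Pi.single_eq_same,
          Pi.single_eq_of_ne (Ne.symm hij), neg_zero, zero_add]
        abel
      simp only [S, W', mem_setOf_eq, mem_preimage, SetLike.mem_coe, Submodule.mem_comap, key]
    rw [hset, measure_preimage_add]
    exact Measure.addHaar_submodule volume W' hW'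
  -- the union of all bad sets is null
  let B : Set (Fin n → (Fin 5 → ℝ)) := ⋃ (i : Fin n) (j : Fin n) (_ : i ≠ j) (k : Fin 5 → ℤ), S i j k
  have hB : volume B = 0 :=
    measure_iUnion_null fun i => measure_iUnion_null fun j =>
      measure_iUnion_null fun hij => measure_iUnion_null fun k => hS i j k hij
  obtain ⟨x, hx⟩ : ∃ x : (Fin n → (Fin 5 → ℝ)), x ∉ B := by
    by_contra h
    push_neg at h
    have hBuniv : B = univ := eq_univ_of_forall h
    rw [hBuniv] at hB
    exact (isOpen_univ.measure_ne_zero (volume : Measure (Fin n → (Fin 5 → ℝ))) univ_nonempty) hB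
  refine ⟨x, fun i j hij => ?_⟩
  rw [Set.disjoint_left]
  rintro y ⟨s, t, k, rfl⟩ ⟨s', t', k', hy⟩
  apply hx
  have hck : c (k' - k) = c k' - c k := by
    funext m
    simp only [c, Pi.sub_apply, Int.cast_sub]
    ring
  have hmem : x i - x j - c (k' - k) ∈ W i j := by
    have e1 : x i - x j - c (k' - k) =
        (s' • ξ₁ j + t' • ξ₂ j) - (s • ξ₁ i + t • ξ₂ i) := by
      rw [hck]
      have hy' : (s • ξ₁ i + t • ξ₂ i + x i + c k) = (s' • ξ₁ j + t' • ξ₂ j + x j + c k') := hy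
      rw [← sub_eq_zero] at hy' ⊢
      rw [← hy']
      abel
    rw [e1]
    refine Submodule.sub_mem _ ?_ ?_
    · exact Submodule.add_mem _
        (Submodule.smul_mem _ _ (Submodule.subset_span (by simp)))
        (Submodule.smul_mem _ _ (Submodule.subset_span (by simp)))
    · exact Submodule.add_mem _
        (Submodule.smul_mem _ _ (Submodule.subset_span (by simp)))
        (Submodule.smul_mem _ _ (Submodule.subset_span (by simp)))
  refine mem_iUnion.2 ⟨i, mem_iUnion.2 ⟨j, mem_iUnion.2 ⟨hij, mem_iUnion.2 ⟨k' - k, ?_⟩⟩⟩⟩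
  exact hmem
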